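/- Let m ≤ n and let {A,B} be an (m,p,n)-GMP with GSVD as in the context, with generalized singular values (αᵢ, βᵢ). Then for every 1 ≤ i ≤ m, max_{Π₃ ∈ 𝕌_n, Π₄ ∈ 𝕌_m} |tr(Π₃ (AᴴA + BᴴB)^{-1/2} Aᴴ Π₄ 𝒮_i)| = α₁ + α₂ + ⋯ + αᵢ. -/

import Mathlib

open Matrix BigOperators
open scoped ComplexOrder
open Finset

/-!
Put `Q = R S⁻¹`. The GSVD relations give `S² = RᴴR`, so `Q` is unitary and `S⁻¹Aᴴ = Qᴴ Σᴴ Uᴴ`;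
hence every trace in question is `tr (V Σᴴ W 𝒮ᵢ)` for unitary `V`, `W`, and `V = W = 1` gives the
value `α₁ + ⋯ + αᵢ`. Conversely, expanding the trace bounds its modulus by `∑ₖ αₖ cₖ` with
`cₖ = ∑_{j ≤ i} |V_{jk}| |W_{kj}|`. Cauchy–Schwarz along the rows and columns of `V` and `W` gives
`cₖ ≤ 1` and `∑ₖ cₖ ≤ i`, and among such weights `∑ₖ αₖ cₖ` is largest when the weight sits on
the `i` largest `αₖ` (the bathtub principle).
-/

theorem Finset.sum_mul_le_sum_of_threshold {ι : Type*} [Fintype ι] [DecidableEq ι] (a c : ι → ℝ)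
    (s : Finset ι) (t : ℝ) (ht : 0 ≤ t) (has : ∀ k ∈ s, t ≤ a k) (hasc : ∀ k ∉ s, a k ≤ t)
    (hc0 : ∀ k, 0 ≤ c k) (hc1 : ∀ k, c k ≤ 1) (hc : ∑ k, c k ≤ #s) :
    ∑ k, a k * c k ≤ ∑ k ∈ s, a k := by
  have hout : ∑ k ∈ sᶜ, a k * c k ≤ t * ∑ k ∈ sᶜ, c k := by
    rw [mul_sum]
    exact sum_le_sum fun k hk ↦ mul_le_mul_of_nonneg_right (hasc k (mem_compl.1 hk)) (hc0 k)
  have hmass : ∑ k ∈ sᶜ, c k ≤ ∑ k ∈ s, (1 - c k) := by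
    rw [← sum_add_sum_compl s c] at hc
    simp only [sum_sub_distrib, sum_const, nsmul_eq_mul, mul_one]
    linarith
  have hin : t * ∑ k ∈ s, (1 - c k) ≤ ∑ k ∈ s, a k * (1 - c k) := by
    rw [mul_sum]
    exact sum_le_sum fun k hk ↦ mul_le_mul_of_nonneg_right (has k hk) (sub_nonneg.2 (hc1 k))
  calc ∑ k, a k * c k = ∑ k ∈ s, a k * c k + ∑ k ∈ sᶜ, a k * c k :=
        (sum_add_sum_compl s _).symm
    _ ≤ ∑ k ∈ s, a k * c k + ∑ k ∈ s, a k * (1 - c k) := by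
        gcongr
        exact hout.trans ((mul_le_mul_of_nonneg_left hmass ht).trans hin)
    _ = ∑ k ∈ s, a k := by
        rw [← sum_add_distrib]
        exact sum_congr rfl fun k _ ↦ by ring

theorem Finset.sum_mul_le_one_of_sum_sq_le_one {ι : Type*} (s : Finset ι) (x y : ι → ℝ)
    (hx : ∑ j ∈ s, x j ^ 2 ≤ 1) (hy : ∑ j ∈ s, y j ^ 2 ≤ 1) : ∑ j ∈ s, x j * y j ≤ 1 := by
  have h : ∑ j ∈ s, 2 * (x j * y j) ≤ ∑ j ∈ s, (x j ^ 2 + y j ^ 2) :=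
    sum_le_sum fun j _ ↦ by rw [← mul_assoc]; exact two_mul_le_add_sq _ _
  rw [← mul_sum, sum_add_distrib] at h
  linarith

theorem Finset.sum_comp_le_sum_of_injective {ι κ M : Type*} [Fintype ι] [Fintype κ]
    [AddCommMonoid M] [PartialOrder M] [IsOrderedAddMonoid M] {e : κ → ι}
    (he : Function.Injective e) {f : ι → M} (hf : ∀ l, 0 ≤ f l) :
    ∑ k, f (e k) ≤ ∑ l, f l :=
  (sum_map univ ⟨e, he⟩ f).symm.trans_le (sum_le_univ_sum_of_nonneg fun l ↦ hf l)

theorem ciSup_eq_of_forall_le_of_eq {ι α : Type*} [ConditionallyCompleteLattice α] {f : ι → α}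
    {c : α} (h : ∀ i, f i ≤ c) (i₀ : ι) (h₀ : f i₀ = c) : ⨆ i, f i = c :=
  haveI : Nonempty ι := ⟨i₀⟩
  IsLUB.ciSup_eq ⟨by rintro _ ⟨i, rfl⟩; exact h i, fun _ hb ↦ h₀ ▸ hb ⟨i₀, rfl⟩⟩

namespace Matrix

section RowColNorm

variable {ι ι' κ κ' 𝕜 : Type*} [Fintype ι] [Fintype ι'] [Fintype κ] [Fintype κ'] [RCLike 𝕜]

def RowColNormSqLeOne (X : Matrix ι ι' 𝕜) : Prop :=
  (∀ a, ∑ b, ‖X a b‖ ^ 2 ≤ 1) ∧ ∀ b, ∑ a, ‖X a b‖ ^ 2 ≤ 1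

theorem sum_norm_sq_row_of_mem_unitaryGroup [DecidableEq ι] {V : Matrix ι ι 𝕜}
    (hV : V ∈ unitaryGroup ι 𝕜) (a : ι) : ∑ b, ‖V a b‖ ^ 2 = 1 := by
  have h : (V * star V) a a = 1 := by rw [mem_unitaryGroup_iff.mp hV, one_apply_eq]
  simp only [mul_apply, star_apply, RCLike.star_def, RCLike.mul_conj] at h
  exact_mod_cast h

theorem sum_norm_sq_col_of_mem_unitaryGroup [DecidableEq ι] {V : Matrix ι ι 𝕜}
    (hV : V ∈ unitaryGroup ι 𝕜) (b : ι) : ∑ a, ‖V a b‖ ^ 2 = 1 := by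
  have h : (star V * V) b b = 1 := by rw [mem_unitaryGroup_iff'.mp hV, one_apply_eq]
  simp only [mul_apply, star_apply, RCLike.star_def, RCLike.conj_mul] at h
  exact_mod_cast h

theorem rowColNormSqLeOne_of_mem_unitaryGroup [DecidableEq ι] {V : Matrix ι ι 𝕜}
    (hV : V ∈ unitaryGroup ι 𝕜) : V.RowColNormSqLeOne :=
  ⟨fun a ↦ (sum_norm_sq_row_of_mem_unitaryGroup hV a).le,
    fun b ↦ (sum_norm_sq_col_of_mem_unitaryGroup hV b).le⟩

theorem RowColNormSqLeOne.submatrix {X : Matrix ι ι' 𝕜} (hX : X.RowColNormSqLeOne)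
    {e₁ : κ → ι} {e₂ : κ' → ι'} (he₁ : Function.Injective e₁) (he₂ : Function.Injective e₂) :
    (X.submatrix e₁ e₂).RowColNormSqLeOne :=
  ⟨fun a ↦ (sum_comp_le_sum_of_injective he₂ fun _ ↦ sq_nonneg _).trans (hX.1 (e₁ a)),
    fun b ↦ (sum_comp_le_sum_of_injective he₁ fun _ ↦ sq_nonneg _).trans (hX.2 (e₂ b))⟩

theorem trace_diagonal_indicator_mul_mul_diagonal_mul [DecidableEq κ] (s : Finset κ)
    (d : κ → 𝕜) (X Y : Matrix κ κ 𝕜) :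
    trace (diagonal (fun a ↦ if a ∈ s then 1 else 0) * X * diagonal d * Y) =
      ∑ k, d k * ∑ a ∈ s, X a k * Y k a := by
  simp only [trace, diag_apply, mul_apply, diagonal_apply, ite_mul, mul_ite, zero_mul, mul_zero,
    one_mul, sum_ite_eq, sum_ite_eq', mem_univ, if_true]
  rw [sum_comm]
  refine sum_congr rfl fun k _ ↦ ?_
  rw [sum_ite_mem, univ_inter, mul_sum]
  exact sum_congr rfl fun _ _ ↦ by ring

theorem norm_trace_diagonal_indicator_mul_mul_diagonal_mul_le [DecidableEq κ]
    {X Y : Matrix κ κ 𝕜} (hX : X.RowColNormSqLeOne) (hY : Y.RowColNormSqLeOne)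
    (d : κ → ℝ) (hd : ∀ k, 0 ≤ d k) (s : Finset κ) (t : ℝ) (ht : 0 ≤ t)
    (hts : ∀ k ∈ s, t ≤ d k) (htsc : ∀ k ∉ s, d k ≤ t) :
    ‖trace (diagonal (fun a ↦ if a ∈ s then 1 else 0) * X * diagonal (fun k ↦ (d k : 𝕜)) * Y)‖
      ≤ ∑ k ∈ s, d k := by
  set c : κ → ℝ := fun k ↦ ∑ a ∈ s, ‖X a k‖ * ‖Y k a‖
  have hc0 : ∀ k, 0 ≤ c k := fun k ↦ sum_nonneg fun _ _ ↦ by positivity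
  have hc1 : ∀ k, c k ≤ 1 := fun k ↦ sum_mul_le_one_of_sum_sq_le_one s _ _
    ((sum_le_univ_sum_of_nonneg fun _ ↦ sq_nonneg _).trans (hX.2 k))
    ((sum_le_univ_sum_of_nonneg fun _ ↦ sq_nonneg _).trans (hY.1 k))
  have hc : ∑ k, c k ≤ #s :=
    calc ∑ k, c k = ∑ a ∈ s, ∑ k, ‖X a k‖ * ‖Y k a‖ := sum_comm
      _ ≤ ∑ _a ∈ s, 1 :=
        sum_le_sum fun a _ ↦ sum_mul_le_one_of_sum_sq_le_one univ _ _ (hX.1 a) (hY.2 a)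
      _ = #s := by simp
  calc _ ≤ ∑ k, d k * c k := by
        rw [trace_diagonal_indicator_mul_mul_diagonal_mul]
        refine norm_sum_le_of_le _ fun k _ ↦ ?_
        rw [norm_mul, RCLike.norm_ofReal, abs_of_nonneg (hd k)]
        exact mul_le_mul_of_nonneg_left ((norm_sum_le _ _).trans_eq
          (sum_congr rfl fun a _ ↦ norm_mul (X a k) (Y k a))) (hd k)
    _ ≤ ∑ k ∈ s, d k := sum_mul_le_sum_of_threshold d c s t ht hts htsc hc0 hc1 hc

end RowColNorm

section GSVD

variable {ι κ 𝕜 : Type*} [Fintype ι] [Fintype κ] [RCLike 𝕜]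

theorem conjTranspose_mul_add_conjTranspose_mul_eq {μ π ν : Type*} [Fintype μ] [Fintype π]
    [Fintype ν] [DecidableEq μ] [DecidableEq ν]
    {A : Matrix μ ν 𝕜} {B : Matrix π ν 𝕜} {U : Matrix μ μ 𝕜} (hU : U ∈ unitaryGroup μ 𝕜)
    {D : Matrix μ ν 𝕜} {Γ R : Matrix ν ν 𝕜} (hA : A = U * D * R) (hB : Bᴴ * B = Rᴴ * Γ * R)
    (hDΓ : Dᴴ * D + Γ = 1) : Aᴴ * A + Bᴴ * B = Rᴴ * R := by
  have hUU : Uᴴ * U = 1 := mem_unitaryGroup_iff'.mp hU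
  calc Aᴴ * A + Bᴴ * B = Rᴴ * (Dᴴ * (Uᴴ * U) * D + Γ) * R := by
        rw [hA, hB]
        simp only [conjTranspose_mul, Matrix.mul_add, Matrix.add_mul, Matrix.mul_assoc]
    _ = Rᴴ * R := by rw [hUU, Matrix.mul_one, hDΓ, Matrix.mul_one]

theorem mul_nonsing_inv_mem_unitaryGroup [DecidableEq ι] {S R : Matrix ι ι 𝕜}
    (hS : S.IsHermitian) (hR : IsUnit R.det) (h : S * S = Rᴴ * R) :
    R * S⁻¹ ∈ unitaryGroup ι 𝕜 := by
  have hSdet : IsUnit S.det := by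
    have hSS : IsUnit (S * S).det := by rw [h, det_mul, det_conjTranspose]; exact hR.star.mul hR
    rw [det_mul] at hSS
    exact isUnit_of_mul_isUnit_left hSS
  rw [mem_unitaryGroup_iff', star_eq_conjTranspose, conjTranspose_mul, conjTranspose_nonsing_inv,
    hS.eq]
  calc S⁻¹ * Rᴴ * (R * S⁻¹) = S⁻¹ * S * (S * S⁻¹) := by
        rw [Matrix.mul_assoc S⁻¹ S, ← Matrix.mul_assoc S, h]; simp only [Matrix.mul_assoc]
    _ = 1 := by rw [nonsing_inv_mul S hSdet, mul_nonsing_inv S hSdet, Matrix.one_mul]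

/-- `rectDiagonal (Fin.castLE _) α` is the paper's `Σ_A = (diag(α₁, …, α_m), 0)`; with the
indicator of `Iic i` in place of `α` it is `𝒮_{i+1}`. -/
def rectDiagonal {α : Type*} [Zero α] [DecidableEq ι] (e : κ → ι) (d : ι → α) : Matrix κ ι α :=
  (diagonal d).submatrix e id

theorem of_castLE_eq_rectDiagonal {m n : ℕ} {α : Type*} [Zero α] (hmn : m ≤ n) (f : Fin n → α) :
    (of fun (k : Fin m) (l : Fin n) ↦ if (k : ℕ) = (l : ℕ) then f l else 0) =
      rectDiagonal (Fin.castLE hmn) f := by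
  ext k l
  simp only [rectDiagonal, of_apply, submatrix_apply, id, diagonal_apply, Fin.ext_iff,
    Fin.val_castLE]
  split_ifs with h
  · congr 1
    ext
    simp [h]
  · rfl

theorem of_castLE_and_le_eq_rectDiagonal {m n : ℕ} {α : Type*} [Zero α] [One α] (hmn : m ≤ n)
    (i : Fin n) :
    (of fun (k : Fin m) (l : Fin n) ↦
        if (k : ℕ) = (l : ℕ) ∧ (k : ℕ) ≤ (i : ℕ) then (1 : α) else 0) =
      rectDiagonal (Fin.castLE hmn) fun l ↦ if l ≤ i then 1 else 0 := by
  rw [← of_castLE_eq_rectDiagonal]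
  ext k l
  simp only [of_apply]
  by_cases h : (k : ℕ) = l
  · simp only [h, true_and, if_true, Fin.le_def]
  · simp only [h, false_and, if_false]

variable {e : κ → ι} {d : ι → ℝ}

theorem conjTranspose_rectDiagonal_mul_self_add_diagonal_one_sub_sq [DecidableEq ι]
    (he : Function.Injective e) (hzero : ∀ l ∉ Set.range e, d l = 0) :
    (rectDiagonal e fun l ↦ (d l : 𝕜))ᴴ * (rectDiagonal e fun l ↦ (d l : 𝕜)) +
      diagonal (fun l ↦ ((1 - d l ^ 2 : ℝ) : 𝕜)) = 1 := by
  have hrows : (rectDiagonal e fun l ↦ (d l : 𝕜))ᴴ * (rectDiagonal e fun l ↦ (d l : 𝕜)) =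
      (diagonal fun l ↦ (d l : 𝕜))ᴴ * diagonal fun l ↦ (d l : 𝕜) := by
    ext a b
    simp only [rectDiagonal, mul_apply, conjTranspose_apply, submatrix_apply, id]
    exact Fintype.sum_of_injective e he _ _ (fun j hj ↦ by simp [diagonal_apply, hzero j hj])
      fun _ ↦ rfl
  rw [hrows, diagonal_conjTranspose, diagonal_mul_diagonal, diagonal_add, ← diagonal_one]
  congr 1
  ext l
  simp only [Pi.star_apply, RCLike.star_def, RCLike.conj_ofReal, RCLike.ofReal_sub,
    RCLike.ofReal_one, RCLike.ofReal_pow]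
  ring

variable [LinearOrder ι] (i : ι)

theorem trace_mul_conjTranspose_rectDiagonal_mul_mul_rectDiagonal [DecidableEq κ]
    (V : Matrix ι ι 𝕜) (W : Matrix κ κ 𝕜) :
    trace (V * (rectDiagonal e fun l ↦ (d l : 𝕜))ᴴ * W *
      rectDiagonal e fun l ↦ if l ≤ i then (1 : 𝕜) else 0) =
      trace (diagonal (fun k ↦ if k ∈ ({k | e k ≤ i} : Finset κ) then 1 else 0) *
        V.submatrix e e * diagonal (fun k ↦ (d (e k) : 𝕜)) * W) := by
  rw [trace_mul_comm]
  simp only [← Matrix.mul_assoc]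
  congr 2
  ext k k'
  simp [rectDiagonal, mul_apply, diagonal_apply]

variable [LocallyFiniteOrderBot ι]

theorem sum_filter_comp_le_eq_sum_Iic (he : Function.Injective e)
    (hzero : ∀ l ∉ Set.range e, d l = 0) :
    ∑ k with e k ≤ i, d (e k) = ∑ l ∈ Iic i, d l := by
  rw [sum_filter, Fintype.sum_of_injective e he _ (fun l ↦ if l ≤ i then d l else 0)
    (fun l hl ↦ by simp [hzero l hl]) fun _ ↦ rfl, ← sum_filter, filter_ge_eq_Iic]

theorem trace_conjTranspose_rectDiagonal_mul_rectDiagonal [DecidableEq κ]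
    (he : Function.Injective e) (hzero : ∀ l ∉ Set.range e, d l = 0) :
    trace ((rectDiagonal e fun l ↦ (d l : 𝕜))ᴴ *
      rectDiagonal e fun l ↦ if l ≤ i then (1 : 𝕜) else 0) = ∑ l ∈ Iic i, d l := by
  have h := trace_mul_conjTranspose_rectDiagonal_mul_mul_rectDiagonal (e := e) (d := d) i
    (1 : Matrix ι ι 𝕜) (1 : Matrix κ κ 𝕜)
  rw [Matrix.one_mul, Matrix.mul_one, submatrix_one _ he, Matrix.mul_one, Matrix.mul_one,
    diagonal_mul_diagonal, trace_diagonal] at h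
  rw [h, ← sum_filter_comp_le_eq_sum_Iic i he hzero]
  simp [sum_filter, apply_ite (algebraMap ℝ 𝕜)]

theorem norm_trace_mul_conjTranspose_rectDiagonal_mul_mul_rectDiagonal_le [DecidableEq κ]
    (he : Function.Injective e) (hzero : ∀ l ∉ Set.range e, d l = 0)
    (hd0 : ∀ l, 0 ≤ d l) (hd : Antitone d) {V : Matrix ι ι 𝕜} (hV : V ∈ unitaryGroup ι 𝕜)
    {W : Matrix κ κ 𝕜} (hW : W ∈ unitaryGroup κ 𝕜) :
    ‖trace (V * (rectDiagonal e fun l ↦ (d l : 𝕜))ᴴ * W *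
      rectDiagonal e fun l ↦ if l ≤ i then (1 : 𝕜) else 0)‖ ≤ ∑ l ∈ Iic i, d l := by
  rw [trace_mul_conjTranspose_rectDiagonal_mul_mul_rectDiagonal,
    ← sum_filter_comp_le_eq_sum_Iic i he hzero]
  exact norm_trace_diagonal_indicator_mul_mul_diagonal_mul_le
    ((rowColNormSqLeOne_of_mem_unitaryGroup hV).submatrix he he)
    (rowColNormSqLeOne_of_mem_unitaryGroup hW) (d ∘ e) (fun k ↦ hd0 (e k))
    {k | e k ≤ i} (d i) (hd0 i) (fun k hk ↦ hd (mem_filter.1 hk).2)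
    (fun k hk ↦ hd (le_of_lt (by simpa using hk)))

end GSVD

end Matrix

theorem stmt14_general
    {m p n : ℕ} (hmn : m ≤ n)
    (A : Matrix (Fin m) (Fin n) ℂ) (B : Matrix (Fin p) (Fin n) ℂ)
    (U : Matrix (Fin m) (Fin m) ℂ) (hU : U ∈ Matrix.unitaryGroup (Fin m) ℂ)
    (R : Matrix (Fin n) (Fin n) ℂ) (hR : IsUnit R.det)
    (α : Fin n → ℝ)
    (hα0 : ∀ k, 0 ≤ α k) (hmono : Antitone α)
    (hzero : ∀ k : Fin n, m ≤ (k : ℕ) → α k = 0)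
    (hA : A = U * (Matrix.of fun (k : Fin m) (l : Fin n) =>
        if (k : ℕ) = (l : ℕ) then Complex.ofReal (α l) else 0) * R)
    (hBB : Bᴴ * B = Rᴴ * Matrix.diagonal (fun l => Complex.ofReal (1 - α l ^ 2)) * R)
    (S : Matrix (Fin n) (Fin n) ℂ) (hS : S.PosDef)
    (hSsq : S * S = Aᴴ * A + Bᴴ * B)
    (i : Fin n) :
(⨆ W3 : Matrix.unitaryGroup (Fin n) ℂ, ⨆ W4 : Matrix.unitaryGroup (Fin m) ℂ,
      ‖(Matrix.trace ((W3 : Matrix (Fin n) (Fin n) ℂ) * S⁻¹ * Aᴴ *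
        (W4 : Matrix (Fin m) (Fin m) ℂ) *
        Matrix.of (fun (k : Fin m) (l : Fin n) =>
          if (k : ℕ) = (l : ℕ) ∧ (k : ℕ) ≤ (i : ℕ) then (1 : ℂ) else 0)))‖) =
      ∑ k ∈ Finset.Iic i, α k := by
  have he := Fin.castLE_injective hmn
  have hzero' : ∀ l ∉ Set.range (Fin.castLE hmn), α l = 0 := fun l hl ↦
    hzero l (not_lt.1 (by simpa [Fin.range_castLE] using hl))
  rw [of_castLE_eq_rectDiagonal hmn] at hA
  rw [of_castLE_and_le_eq_rectDiagonal hmn]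
  have hQ := mul_nonsing_inv_mem_unitaryGroup hS.1 hR <| hSsq.trans <|
    conjTranspose_mul_add_conjTranspose_mul_eq hU hA hBB
      (conjTranspose_rectDiagonal_mul_self_add_diagonal_one_sub_sq he hzero')
  have hfactor : ∀ (V : Matrix (Fin n) (Fin n) ℂ) (W : Matrix (Fin m) (Fin m) ℂ),
      V * S⁻¹ * Aᴴ * W = V * star (R * S⁻¹) *
        (rectDiagonal (Fin.castLE hmn) fun l ↦ (α l : ℂ))ᴴ * (star U * W) := fun V W ↦ by
    simp only [hA, conjTranspose_mul, conjTranspose_nonsing_inv, hS.1.eq, star_eq_conjTranspose,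
      Matrix.mul_assoc]
  have hbound : ∀ (V : unitaryGroup (Fin n) ℂ) (W : unitaryGroup (Fin m) ℂ),
      ‖trace ((V : Matrix (Fin n) (Fin n) ℂ) * S⁻¹ * Aᴴ * (W : Matrix (Fin m) (Fin m) ℂ) *
        rectDiagonal (Fin.castLE hmn) fun l ↦ if l ≤ i then (1 : ℂ) else 0)‖ ≤ ∑ k ∈ Iic i, α k :=
    fun V W ↦ hfactor V W ▸ norm_trace_mul_conjTranspose_rectDiagonal_mul_mul_rectDiagonal_le i
      he hzero' hα0 hmono (mul_mem V.2 (Unitary.star_mem hQ)) (mul_mem (Unitary.star_mem hU) W.2)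
  refine ciSup_eq_of_forall_le_of_eq (fun V ↦ ciSup_le (hbound V)) ⟨R * S⁻¹, hQ⟩
    (ciSup_eq_of_forall_le_of_eq (hbound _) ⟨U, hU⟩ ?_)
  rw [hfactor, Unitary.mul_star_self_of_mem hQ, Unitary.star_mul_self_of_mem hU, Matrix.one_mul,
    Matrix.mul_one]
  refine (congrArg norm (trace_conjTranspose_rectDiagonal_mul_rectDiagonal i he hzero')).trans ?_
  rw [RCLike.norm_ofReal, abs_of_nonneg (sum_nonneg fun k _ ↦ hα0 k)]

theorem stmt14
    {m p n : ℕ} (hmn : m ≤ n)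
    (A : Matrix (Fin m) (Fin n) ℂ) (B : Matrix (Fin p) (Fin n) ℂ)
    (hrank : (Matrix.fromRows A B).rank = n)
    (U : Matrix (Fin m) (Fin m) ℂ) (hU : U ∈ Matrix.unitaryGroup (Fin m) ℂ)
    (R : Matrix (Fin n) (Fin n) ℂ) (hR : IsUnit R.det)
    (α : Fin n → ℝ)
    (hα0 : ∀ k, 0 ≤ α k) (hα1 : ∀ k, α k ≤ 1) (hmono : Antitone α)
    (hzero : ∀ k : Fin n, m ≤ (k : ℕ) → α k = 0)
    (hA : A = U * (Matrix.of fun (k : Fin m) (l : Fin n) =>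
        if (k : ℕ) = (l : ℕ) then Complex.ofReal (α l) else 0) * R)
    (hBB : Bᴴ * B = Rᴴ * Matrix.diagonal (fun l => Complex.ofReal (1 - α l ^ 2)) * R)
    (S : Matrix (Fin n) (Fin n) ℂ) (hS : S.PosDef)
    (hSsq : S * S = Aᴴ * A + Bᴴ * B)
    (i : Fin n) (him : (i : ℕ) < m) :
(⨆ W3 : Matrix.unitaryGroup (Fin n) ℂ, ⨆ W4 : Matrix.unitaryGroup (Fin m) ℂ,
      ‖(Matrix.trace ((W3 : Matrix (Fin n) (Fin n) ℂ) * S⁻¹ * Aᴴ *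
        (W4 : Matrix (Fin m) (Fin m) ℂ) *
        Matrix.of (fun (k : Fin m) (l : Fin n) =>
          if (k : ℕ) = (l : ℕ) ∧ (k : ℕ) ≤ (i : ℕ) then (1 : ℂ) else 0)))‖) =
      ∑ k ∈ Finset.Iic i, α k :=
  stmt14_general hmn A B U hU R hR α hα0 hmono hzero hA hBB S hS hSsq i
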